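/- Let M be the structure with domain {(m,n) ∈ ℕ × ℤ : m ∈ {0,1}, m = 0 → n ≥ 0}, with 0^M = (0,0), s((m,n)) = (m,n+1), f((m,n)) = (1,n), and P = {(0,n) : n ∈ ℕ}. Then M satisfies: s(x) ≠ 0 for all x, s is injective, P(0) holds, P(x) → P(s(x)) holds for all x, yet P(f(0^M)) fails. Moreover, for every subset S of the domain of M: if (0,0) ∈ S and S is closed under s, then (0,0) ∈ S (trivially); in particular every subset of M containing 0^M and closed under s contains the interpretation of the constant η = (0,0), while (1,0) = f(η^M) ∉ P. -/

import Mathlib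

namespace Stmt13

/-- Domain: pairs `(m,n)` with `m ∈ {0,1}` and `m = 0 → n ≥ 0`. -/
def D : Type := {x : ℕ × ℤ // x.1 ≤ 1 ∧ (x.1 = 0 → 0 ≤ x.2)}

def zero : D := ⟨(0, 0), ⟨Nat.zero_le 1, fun _ => le_refl 0⟩⟩

def succ (a : D) : D :=
  ⟨(a.1.1, a.1.2 + 1), ⟨a.2.1, fun h => by have := a.2.2 h; omega⟩⟩

def f (a : D) : D := ⟨(1, a.1.2), ⟨le_refl 1, fun h => absurd h one_ne_zero⟩⟩

/-- The predicate `P = {(0,n) : n ∈ ℕ}`. -/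
def P : Set D := {x | x.1.1 = 0}

theorem succ_ne_zero (x : D) : succ x ≠ zero := by
  intro h
  have hfst : x.1.1 = 0 := congrArg (fun a : D => a.1.1) h
  have hsnd : x.1.2 + 1 = 0 := congrArg (fun a : D => a.1.2) h
  -- on the component `m = 0` the domain has no negative `n`, so `(0,0)` has no predecessor
  have := x.2.2 hfst
  omega

theorem succ_injective : Function.Injective succ := by
  intro a b h
  have hfst : (succ a).1.1 = (succ b).1.1 := congrArg (fun x : D => x.1.1) h
  have hsnd : (succ a).1.2 = (succ b).1.2 := congrArg (fun x : D => x.1.2) h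
  exact Subtype.ext (Prod.ext hfst (add_right_cancel hsnd))

theorem succ_mem_P_iff {x : D} : succ x ∈ P ↔ x ∈ P := Iff.rfl

theorem f_notMem_P (a : D) : f a ∉ P := one_ne_zero

theorem stmt13 :
    (∀ x : D, succ x ≠ zero) ∧
    Function.Injective succ ∧
    zero ∈ P ∧
    (∀ x : D, x ∈ P → succ x ∈ P) ∧
    f zero ∉ P ∧
    (∀ S : Set D, zero ∈ S → (∀ x ∈ S, succ x ∈ S) → zero ∈ S) ∧
    f zero = ⟨(1, 0), ⟨le_refl 1, fun h => absurd h one_ne_zero⟩⟩ :=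
  ⟨succ_ne_zero, succ_injective, rfl, fun _ => succ_mem_P_iff.2, f_notMem_P zero,
    fun _ hzero _ => hzero, rfl⟩

end Stmt13
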